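/- Let M ≥ 1 be an integer, and let v_0, …, v_{M−1} ∈ ℝ and w_0, …, w_{M−1} ∈ ℝ be nodes and weights such that Σ_{m=0}^{M−1} w_m·q(v_m) = ∫_ℝ q(v)·exp(−v²) dv for every polynomial q ∈ ℝ[X] of degree at most 2M−1. Then for every polynomial p ∈ ℝ[X] of degree at most 2M−2, Σ_{m=0}^{M−1} w_m·(p′(v_m) − 2·v_m·p(v_m)) = 0. -/

import Mathlib

/-!
Since `(p(u) e^{-u²})' = (p'(u) - 2u p(u)) e^{-u²}` and `p(u) e^{-u²}` decays at infinity, the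
Gaussian integral of `p' - 2Xp` vanishes. This polynomial has degree at most `2M - 1`, so the
quadrature rule evaluates it exactly, and the sum equals that integral.
-/

open Polynomial MeasureTheory

namespace Polynomial

theorem integrable_eval_mul_exp_neg_sq (p : ℝ[X]) :
    Integrable fun u : ℝ => p.eval u * Real.exp (-u ^ 2) := by
  induction p using Polynomial.induction_on' with
  | add p q hp hq => simpa only [eval_add, add_mul] using hp.fun_add hq
  | monomial n a =>
    have hpow : Integrable fun u : ℝ => u ^ n * Real.exp (-u ^ 2) := by
      simpa [Real.rpow_natCast] using integrable_rpow_mul_exp_neg_mul_sq (b := 1) one_pos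
        (s := n) (by linarith [n.cast_nonneg (α := ℝ)])
    simpa only [eval_monomial, mul_assoc] using hpow.const_mul a

theorem hasDerivAt_eval_mul_exp_neg_sq (p : ℝ[X]) (x : ℝ) :
    HasDerivAt (fun u : ℝ => p.eval u * Real.exp (-u ^ 2))
      (((derivative p).eval x - 2 * x * p.eval x) * Real.exp (-x ^ 2)) x := by
  refine ((p.hasDerivAt x).fun_mul (hasDerivAt_pow 2 x).fun_neg.exp).congr_deriv ?_
  push_cast
  ring

theorem eval_derivative_sub_two_X_mul (p : ℝ[X]) (x : ℝ) :
    (derivative p - C 2 * X * p).eval x = (derivative p).eval x - 2 * x * p.eval x := by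
  simp only [eval_sub, eval_mul, eval_C, eval_X]

theorem integral_eval_derivative_sub_two_mul_mul_exp_neg_sq (p : ℝ[X]) :
    ∫ u : ℝ, ((derivative p).eval u - 2 * u * p.eval u) * Real.exp (-u ^ 2) = 0 := by
  have hint := integrable_eval_mul_exp_neg_sq (derivative p - C 2 * X * p)
  simp only [eval_derivative_sub_two_X_mul] at hint
  exact integral_eq_zero_of_hasDerivAt_of_integrable (hasDerivAt_eval_mul_exp_neg_sq p) hint
    (integrable_eval_mul_exp_neg_sq p)

theorem natDegree_derivative_sub_two_X_mul_le (p : ℝ[X]) :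
    (derivative p - C 2 * X * p).natDegree ≤ p.natDegree + 1 := by
  have hCX : (C (2 : ℝ) * X).natDegree ≤ 1 := (natDegree_C_mul_le _ _).trans natDegree_X_le
  refine (natDegree_sub_le _ _).trans (max_le ?_ ?_)
  · exact (natDegree_derivative_le p).trans (by omega)
  · exact natDegree_mul_le.trans (by omega)

end Polynomial

theorem quadrature_hermite_sum_vanishes
    (M : ℕ) (hM : 1 ≤ M)
    (v : Fin M → ℝ) (w : Fin M → ℝ)
    (hquad : ∀ q : Polynomial ℝ, q.natDegree ≤ 2 * M - 1 →
      ∑ m : Fin M, w m * q.eval (v m) = ∫ u : ℝ, q.eval u * Real.exp (-u ^ 2)) :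
    ∀ p : Polynomial ℝ, p.natDegree ≤ 2 * M - 2 →
      ∑ m : Fin M, w m * ((derivative p).eval (v m) - 2 * v m * p.eval (v m)) = 0 := by
  intro p hp
  have hdeg : (derivative p - C 2 * X * p).natDegree ≤ 2 * M - 1 :=
    (natDegree_derivative_sub_two_X_mul_le p).trans (by omega)
  have hexact := hquad _ hdeg
  simp only [eval_derivative_sub_two_X_mul] at hexact
  rw [hexact, integral_eval_derivative_sub_two_mul_mul_exp_neg_sq]
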